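/- Let A ∈ ℂ^{n×n} and B ∈ ℂ^{m×m} be diagonalizable with σ(A) ∩ σ(B) = ∅, let X ∈ ℂ^{m×n} solve XA − BX = C, and let H = [[A, 0], [C, B]]. Suppose (p_j)_{j≥0} ⊂ ℂ[x] and (α_j)_{j≥0} ⊂ ℂ satisfy Σ_{j≥0} |α_j| · max_{λ ∈ σ(A) ∪ σ(B)} |p_j(λ)| < ∞, Σ_{j≥0} α_j p_j(λ) = 1 for every λ ∈ σ(A), and Σ_{j≥0} α_j p_j(λ) = −1 for every λ ∈ σ(B). Then the matrix series Σ_{j≥0} α_j p_j(H) converges in ℂ^{(n+m)×(n+m)} with sum [[I_n, 0], [2X, −I_m]]; in particular X = (1/2)·Σ_{j≥0} α_j · (lower-left m×n block of p_j(H)). -/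

import Mathlib

/-!
The Sylvester equation `X * A - B * X = C` says exactly that `[[1, 0], [X, 1]]` conjugates
`diag(A, B)` into `H`, so `q(H) = [[q(A), 0], [X q(A) - q(B) X, q(B)]]` for every polynomial `q`.
In an eigenbasis of `A` the series `Σ α_j p_j(A)` is diagonal with entries `Σ α_j p_j(λ) = 1`,
so it sums to `1`; likewise `Σ α_j p_j(B)` sums to `-1`. The lower-left block of the limit is then
`X * 1 - (-1) * X = 2X`.
-/

open Matrix Polynomial

theorem Polynomial.aeval_units_conj {R A : Type*} [CommSemiring R] [Semiring A] [Algebra R A]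
    (u : Aˣ) (a : A) (q : R[X]) :
    aeval (↑u * a * ↑u⁻¹) q = ↑u * aeval a q * ↑u⁻¹ := by
  simpa only [ConjAct.units_smul_def, ConjAct.ofConjAct_toConjAct] using
    aeval_smul q (ConjAct.toConjAct u) a

section HasSum

variable {X R l m n o : Type*} [TopologicalSpace R]

theorem HasSum.matrix_fromBlocks [AddCommMonoid R] {f : X → Matrix n l R}
    {g : X → Matrix n m R} {h : X → Matrix o l R} {k : X → Matrix o m R}
    {a : Matrix n l R} {b : Matrix n m R} {c : Matrix o l R} {d : Matrix o m R}
    (hf : HasSum f a) (hg : HasSum g b) (hh : HasSum h c) (hk : HasSum k d) :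
    HasSum (fun x => fromBlocks (f x) (g x) (h x) (k x)) (fromBlocks a b c d) := by
  refine Pi.hasSum.2 fun i => Pi.hasSum.2 fun j => ?_
  rcases i with i | i <;> rcases j with j | j
  exacts [Pi.hasSum.1 (Pi.hasSum.1 hf i) j, Pi.hasSum.1 (Pi.hasSum.1 hg i) j,
    Pi.hasSum.1 (Pi.hasSum.1 hh i) j, Pi.hasSum.1 (Pi.hasSum.1 hk i) j]

theorem HasSum.matrix_toBlocks₂₁ [AddCommMonoid R] {f : X → Matrix (n ⊕ o) (l ⊕ m) R}
    {a : Matrix (n ⊕ o) (l ⊕ m) R} (hf : HasSum f a) :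
    HasSum (fun x => (f x).toBlocks₂₁) a.toBlocks₂₁ :=
  Pi.hasSum.2 fun _ => Pi.hasSum.2 fun _ => Pi.hasSum.1 (Pi.hasSum.1 hf _) _

variable [Fintype m] [NonUnitalNonAssocSemiring R] [IsTopologicalSemiring R]

theorem HasSum.matrix_mul_left (M : Matrix l m R) {f : X → Matrix m n R} {a : Matrix m n R}
    (hf : HasSum f a) : HasSum (fun x => M * f x) (M * a) :=
  hf.map (addMonoidHomMulLeft M) (continuous_const.matrix_mul continuous_id)

theorem HasSum.matrix_mul_right (M : Matrix m n R) {f : X → Matrix l m R} {a : Matrix l m R}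
    (hf : HasSum f a) : HasSum (fun x => f x * M) (a * M) :=
  hf.map (addMonoidHomMulRight M) (continuous_id.matrix_mul continuous_const)

end HasSum

namespace Matrix

variable {ι m n R 𝕜 : Type*} [Fintype m] [Fintype n] [DecidableEq m] [DecidableEq n]

theorem aeval_diagonal [CommSemiring R] (d : n → R) (q : R[X]) :
    aeval (diagonal d) q = diagonal fun i => q.eval (d i) := by
  simpa [aeval_pi_apply] using aeval_algHom_apply (diagonalAlgHom R) d q

theorem hasSum_smul_aeval_diagonal [CommSemiring R] [TopologicalSpace R] {d t : n → R}
    {p : ι → R[X]} {α : ι → R}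
    (h : ∀ i, HasSum (fun j => α j * (p j).eval (d i)) (t i)) :
    HasSum (fun j => α j • aeval (diagonal d) (p j)) (diagonal t) := by
  simp only [aeval_diagonal, ← diagonal_smul]
  exact (Pi.hasSum.2 h).matrix_diagonal

theorem aeval_fromBlocks_zero [CommSemiring R] (A : Matrix n n R) (B : Matrix m m R) (q : R[X]) :
    aeval (fromBlocks A 0 0 B) q = fromBlocks (aeval A q) 0 0 (aeval B q) := by
  induction q using Polynomial.induction_on' with
  | add p q hp hq => simp [hp, hq, fromBlocks_add]
  | monomial k r =>
    simp [aeval_monomial, Algebra.algebraMap_eq_smul_one, fromBlocks_diagonal_pow, fromBlocks_smul]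

theorem fromBlocks_eq_conj_of_sylvester [Ring R] {A : Matrix n n R} {B : Matrix m m R}
    {C X : Matrix m n R} (hX : X * A - B * X = C) :
    fromBlocks A 0 C B = fromBlocks 1 0 X 1 * fromBlocks A 0 0 B * fromBlocks 1 0 (-X) 1 := by
  simp [fromBlocks_multiply, ← hX, Matrix.mul_neg, sub_eq_add_neg]

theorem aeval_fromBlocks_of_sylvester [CommRing R] {A : Matrix n n R} {B : Matrix m m R}
    {C X : Matrix m n R} (hX : X * A - B * X = C) (q : R[X]) :
    aeval (fromBlocks A 0 C B) q =
      fromBlocks (aeval A q) 0 (X * aeval A q - aeval B q * X) (aeval B q) := by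
  let S : (Matrix (n ⊕ m) (n ⊕ m) R)ˣ :=
    ⟨fromBlocks 1 0 X 1, fromBlocks 1 0 (-X) 1, by simp [fromBlocks_multiply],
      by simp [fromBlocks_multiply]⟩
  calc aeval (fromBlocks A 0 C B) q = aeval (↑S * fromBlocks A 0 0 B * ↑S⁻¹) q := by
        rw [fromBlocks_eq_conj_of_sylvester hX]; rfl
    _ = ↑S * aeval (fromBlocks A 0 0 B) q * ↑S⁻¹ := aeval_units_conj S _ q
    _ = _ := by simp [S, aeval_fromBlocks_zero, fromBlocks_multiply, sub_eq_add_neg]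

variable [TopologicalSpace R] [CommRing R] [IsTopologicalRing R]

theorem hasSum_smul_aeval_fromBlocks_of_sylvester {A : Matrix n n R} {B : Matrix m m R}
    {C X : Matrix m n R} (hX : X * A - B * X = C) {p : ι → R[X]} {α : ι → R}
    {a : Matrix n n R} {b : Matrix m m R}
    (ha : HasSum (fun j => α j • aeval A (p j)) a)
    (hb : HasSum (fun j => α j • aeval B (p j)) b) :
    HasSum (fun j => α j • aeval (fromBlocks A 0 C B) (p j))
      (fromBlocks a 0 (X * a - b * X) b) := by
  have hc := (ha.matrix_mul_left X).sub (hb.matrix_mul_right X)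
  simp only [Matrix.mul_smul, Matrix.smul_mul, ← smul_sub] at hc
  simpa only [aeval_fromBlocks_of_sylvester hX, fromBlocks_smul, smul_zero] using
    ha.matrix_fromBlocks hasSum_zero hc hb

theorem hasSum_smul_aeval_of_eq_conj_diagonal [Field 𝕜] [TopologicalSpace 𝕜]
    [IsTopologicalRing 𝕜] {A V Λ : Matrix n n 𝕜} (hV : IsUnit V.det) (hΛ : Λ.IsDiag)
    (hA : A = V * Λ * V⁻¹) {p : ι → 𝕜[X]} {α : ι → 𝕜} {c : 𝕜}
    (h : ∀ μ ∈ spectrum 𝕜 A, HasSum (fun j => α j * (p j).eval μ) c) :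
    HasSum (fun j => α j • aeval A (p j)) (c • 1) := by
  obtain ⟨u, rfl⟩ := (isUnit_iff_isUnit_det V).mpr hV
  rw [← coe_units_inv, ← hΛ.diagonal_diag] at hA
  subst hA
  have hdiag := hasSum_smul_aeval_diagonal (t := fun _ => c) fun i =>
    h _ (by rw [spectrum.units_conjugate, spectrum_diagonal]; exact ⟨i, rfl⟩)
  simpa only [Matrix.mul_smul, Matrix.smul_mul, ← aeval_units_conj, ← smul_one_eq_diagonal,
    Matrix.mul_one, Units.mul_inv] using
    (hdiag.matrix_mul_left (u : Matrix n n 𝕜)).matrix_mul_right (↑u⁻¹ : Matrix n n 𝕜)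

end Matrix

theorem hasSum_sign_block_sylvester_general {n m : ℕ}
    (A : Matrix (Fin n) (Fin n) ℂ) (B : Matrix (Fin m) (Fin m) ℂ)
    (C X : Matrix (Fin m) (Fin n) ℂ)
    (VA ΛA : Matrix (Fin n) (Fin n) ℂ)
    (hVA : IsUnit VA.det) (hΛA : ΛA.IsDiag) (hA : A = VA * ΛA * VA⁻¹)
    (VB ΛB : Matrix (Fin m) (Fin m) ℂ)
    (hVB : IsUnit VB.det) (hΛB : ΛB.IsDiag) (hB : B = VB * ΛB * VB⁻¹)
    (hX : X * A - B * X = C)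
    (p : ℕ → Polynomial ℂ) (α : ℕ → ℂ)
    (hone : ∀ μ ∈ spectrum ℂ A, HasSum (fun j => α j * (p j).eval μ) 1)
    (hneg : ∀ μ ∈ spectrum ℂ B, HasSum (fun j => α j * (p j).eval μ) (-1)) :
    HasSum (fun j => α j • Polynomial.aeval (Matrix.fromBlocks A 0 C B) (p j))
        (Matrix.fromBlocks 1 0 ((2 : ℂ) • X) (-1)) ∧
      X = (2 : ℂ)⁻¹ •
        ∑' j, α j • (Polynomial.aeval (Matrix.fromBlocks A 0 C B) (p j)).toBlocks₂₁ := by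
  have hsum := hasSum_smul_aeval_fromBlocks_of_sylvester hX
    (hasSum_smul_aeval_of_eq_conj_diagonal hVA hΛA hA hone)
    (hasSum_smul_aeval_of_eq_conj_diagonal hVB hΛB hB hneg)
  rw [one_smul, neg_smul, one_smul, Matrix.mul_one, Matrix.neg_mul, Matrix.one_mul,
    sub_neg_eq_add, ← two_smul ℂ X] at hsum
  refine ⟨hsum, ?_⟩
  have h21 := hsum.matrix_toBlocks₂₁
  rw [toBlocks_fromBlocks₂₁] at h21
  change X = (2 : ℂ)⁻¹ • ∑' j, (α j • aeval (fromBlocks A 0 C B) (p j)).toBlocks₂₁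
  rw [h21.tsum_eq, inv_smul_smul₀ two_ne_zero]

/-- Let `A`, `B` be diagonalizable with disjoint spectra, let `X` solve
`X*A - B*X = C`, and let `H = [[A, 0], [C, B]]`.  If `(p_j) ⊂ ℂ[x]` and `(α_j) ⊂ ℂ` satisfy
`Σ_j |α_j| · max_{λ ∈ σ(A) ∪ σ(B)} |p_j(λ)| < ∞`, `Σ_j α_j p_j(λ) = 1` on `σ(A)` and
`Σ_j α_j p_j(λ) = -1` on `σ(B)`, then `Σ_j α_j p_j(H)` converges to `[[I, 0], [2X, -I]]`;
in particular `X = (1/2) Σ_j α_j · (lower-left block of p_j(H))`. -/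
theorem hasSum_sign_block_sylvester {n m : ℕ}
    (A : Matrix (Fin n) (Fin n) ℂ) (B : Matrix (Fin m) (Fin m) ℂ)
    (C X : Matrix (Fin m) (Fin n) ℂ)
    (VA ΛA : Matrix (Fin n) (Fin n) ℂ)
    (hVA : IsUnit VA.det) (hΛA : ΛA.IsDiag) (hA : A = VA * ΛA * VA⁻¹)
    (VB ΛB : Matrix (Fin m) (Fin m) ℂ)
    (hVB : IsUnit VB.det) (hΛB : ΛB.IsDiag) (hB : B = VB * ΛB * VB⁻¹)
    (hdisj : spectrum ℂ A ∩ spectrum ℂ B = ∅)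
    (hX : X * A - B * X = C)
    (p : ℕ → Polynomial ℂ) (α : ℕ → ℂ)
    (habs : Summable (fun j => ‖α j‖ *
      sSup ((fun μ => ‖(p j).eval μ‖) '' (spectrum ℂ A ∪ spectrum ℂ B))))
    (hone : ∀ μ ∈ spectrum ℂ A, HasSum (fun j => α j * (p j).eval μ) 1)
    (hneg : ∀ μ ∈ spectrum ℂ B, HasSum (fun j => α j * (p j).eval μ) (-1)) :
    HasSum (fun j => α j • Polynomial.aeval (Matrix.fromBlocks A 0 C B) (p j))
        (Matrix.fromBlocks 1 0 ((2 : ℂ) • X) (-1)) ∧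
      X = (2 : ℂ)⁻¹ •
        ∑' j, α j • (Polynomial.aeval (Matrix.fromBlocks A 0 C B) (p j)).toBlocks₂₁ :=
  hasSum_sign_block_sylvester_general A B C X VA ΛA hVA hΛA hA VB ΛB hVB hΛB hB hX p α hone hneg
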